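/- Let P be a probability measure on ℝ^d with finite second moment, let A be an m×d real matrix, let ε > 0, and let c : ℝ^d → ℝ≥0 be an orthomonotone transportation cost, i.e. c(x₁ + x₂) ≥ c(x₁) for all x₁, x₂ ∈ ℝ^d with x₁ᵀx₂ = 0. Then the pushforward of the Wasserstein ambiguity set B_ε^c(P) under the map x ↦ Ax is contained in the Wasserstein ambiguity set B_ε^{c∘A†}(A_#P), where A† is the Moore–Penrose pseudoinverse of A and c∘A† denotes the cost x ↦ c(A†x); that is, for every Q ∈ B_ε^c(P), the pushforward A_#Q satisfies W₂^{c∘A†}(A_#Q, A_#P) ≤ ε. -/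

import Mathlib

open MeasureTheory Matrix
open scoped ENNReal NNReal RealInnerProductSpace Matrix.Norms.L2Operator

noncomputable section

def IsCoupling {α β : Type*} [MeasurableSpace α] [MeasurableSpace β]
    (π : Measure (α × β)) (P : Measure α) (Q : Measure β) : Prop :=
  π.fst = P ∧ π.snd = Q

noncomputable def W2sq {E : Type*} [SubtractionMonoid E] [MeasurableSpace E]
    (c : E → ℝ) (P Q : Measure E) : ℝ≥0∞ :=
  ⨅ π ∈ {π : Measure (E × E) | IsCoupling π P Q},
    ∫⁻ ξ, ENNReal.ofReal ((c (ξ.1 - ξ.2)) ^ 2) ∂π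

def FiniteSecondMoment {E : Type*} [NormedAddCommGroup E] [MeasurableSpace E]
    (P : Measure E) : Prop :=
  Integrable (fun x => ‖x‖ ^ 2) P

def ambiguitySet {E : Type*} [NormedAddCommGroup E] [MeasurableSpace E]
    (c : E → ℝ) (ε : ℝ) (P : Measure E) : Set (Measure E) :=
  {Q | IsProbabilityMeasure Q ∧ FiniteSecondMoment Q ∧ W2sq c Q P ≤ ENNReal.ofReal (ε ^ 2)}

noncomputable def mulVecMap {m d : ℕ} (A : Matrix (Fin m) (Fin d) ℝ) :
    EuclideanSpace ℝ (Fin d) → EuclideanSpace ℝ (Fin m) :=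
  fun x => (EuclideanSpace.equiv (Fin m) ℝ).symm (A.mulVec ((EuclideanSpace.equiv (Fin d) ℝ) x))

noncomputable def meanVec {d : ℕ} (P : Measure (EuclideanSpace ℝ (Fin d))) :
    EuclideanSpace ℝ (Fin d) :=
  ∫ x, x ∂P

noncomputable def covMatrix {d : ℕ} (P : Measure (EuclideanSpace ℝ (Fin d))) :
    Matrix (Fin d) (Fin d) ℝ :=
  Matrix.of fun i j => ∫ x, (x i - meanVec P i) * (x j - meanVec P j) ∂P

/-- The positive semidefinite square root, as `Matrix.PosSemidef.sqrt` was defined in Mathlib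
(Dec 2024); it has since been removed. -/
noncomputable def Matrix.PosSemidef.sqrt {n : Type*} [Fintype n] [DecidableEq n]
    {M : Matrix n n ℝ} (hA : M.PosSemidef) : Matrix n n ℝ :=
  (hA.1.eigenvectorUnitary : Matrix n n ℝ) * diagonal ((↑) ∘ (√·) ∘ hA.1.eigenvalues) *
    (star hA.1.eigenvectorUnitary : Matrix n n ℝ)

open scoped Classical in
noncomputable def psdSqrt {d : ℕ} (M : Matrix (Fin d) (Fin d) ℝ) : Matrix (Fin d) (Fin d) ℝ :=
  if h : M.PosSemidef then h.sqrt else 0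

noncomputable def gelbrichSq {d : ℕ} (μ1 : EuclideanSpace ℝ (Fin d))
    (S1 : Matrix (Fin d) (Fin d) ℝ) (μ2 : EuclideanSpace ℝ (Fin d))
    (S2 : Matrix (Fin d) (Fin d) ℝ) : ℝ :=
  ‖μ1 - μ2‖ ^ 2 + (S1 + S2 - (2 : ℝ) • psdSqrt (psdSqrt S1 * S2 * psdSqrt S1)).trace

noncomputable def CVaR {E : Type*} [MeasurableSpace E] (γ : ℝ) (P : Measure E) (f : E → ℝ) : ℝ :=
  ⨅ τ : ℝ, τ + (1 / γ) * ∫ x, max (f x - τ) 0 ∂P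

def IsMoorePenrose {m d : ℕ} (A : Matrix (Fin m) (Fin d) ℝ)
    (Ad : Matrix (Fin d) (Fin m) ℝ) : Prop :=
  A * Ad * A = A ∧ Ad * A * Ad = Ad ∧ (A * Ad)ᵀ = A * Ad ∧ (Ad * A)ᵀ = Ad * A

noncomputable def mulVecCLM {m d : ℕ} (A : Matrix (Fin m) (Fin d) ℝ) :
    EuclideanSpace ℝ (Fin d) →L[ℝ] EuclideanSpace ℝ (Fin m) :=
  ((EuclideanSpace.equiv (Fin m) ℝ).symm.toContinuousLinearMap).comp
    ((LinearMap.toContinuousLinearMap A.mulVecLin).comp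
      (EuclideanSpace.equiv (Fin d) ℝ).toContinuousLinearMap)

lemma mulVecMap_eq {m d : ℕ} (A : Matrix (Fin m) (Fin d) ℝ) :
    mulVecMap A = mulVecCLM A := rfl

lemma measurable_mulVecMap {m d : ℕ} (A : Matrix (Fin m) (Fin d) ℝ) :
    Measurable (mulVecMap A) := by
  rw [mulVecMap_eq]; exact (mulVecCLM A).continuous.measurable

lemma mulVecMap_sub {m d : ℕ} (A : Matrix (Fin m) (Fin d) ℝ)
    (x y : EuclideanSpace ℝ (Fin d)) :
    mulVecMap A x - mulVecMap A y = mulVecMap A (x - y) := by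
  rw [mulVecMap_eq]; exact (map_sub (mulVecCLM A) x y).symm

lemma mulVecMap_comp {m d e : ℕ} (B : Matrix (Fin e) (Fin m) ℝ) (A : Matrix (Fin m) (Fin d) ℝ)
    (x : EuclideanSpace ℝ (Fin d)) :
    mulVecMap B (mulVecMap A x) = mulVecMap (B * A) x := by
  simp [mulVecMap, Matrix.mulVec_mulVec]
  exact Matrix.mulVec_mulVec (M := B) (N := A) _

lemma inner_ortho {d : ℕ} (B : Matrix (Fin d) (Fin d) ℝ) (hBt : Bᵀ = B) (hBB : B * B = B)
    (u : EuclideanSpace ℝ (Fin d)) :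
    (inner ℝ (mulVecMap B u) (u - mulVecMap B u) : ℝ) = 0 := by
  set E := EuclideanSpace.equiv (Fin d) ℝ
  have h : ∀ (v w : EuclideanSpace ℝ (Fin d)), (inner ℝ v w : ℝ) = E v ⬝ᵥ E w := by
    intro v w
    simp [PiLp.inner_apply, dotProduct, mul_comm]
    rfl
  rw [h]
  have e1 : E (mulVecMap B u) = B.mulVec (E u) := rfl
  have e2 : E (u - mulVecMap B u) = E u - B.mulVec (E u) := by rw [map_sub, e1]
  rw [e1, e2, dotProduct_sub]
  have : (B.mulVec (E u)) ⬝ᵥ (B.mulVec (E u)) = (B.mulVec (E u)) ⬝ᵥ (E u) := by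
    rw [Matrix.dotProduct_mulVec, ← Matrix.mulVec_transpose, hBt, Matrix.mulVec_mulVec, hBB]
  rw [this, sub_self]


-- STATEMENT 0
theorem stmt0 {m d : ℕ} (P : Measure (EuclideanSpace ℝ (Fin d)))
    (hP : IsProbabilityMeasure P) (hP2 : FiniteSecondMoment P)
    (A : Matrix (Fin m) (Fin d) ℝ) (Ad : Matrix (Fin d) (Fin m) ℝ)
    (hAd : IsMoorePenrose A Ad) (ε : ℝ) (hε : 0 < ε)
    (c : EuclideanSpace ℝ (Fin d) → ℝ) (hc : ∀ x, 0 ≤ c x)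
    (hortho : ∀ x₁ x₂ : EuclideanSpace ℝ (Fin d), (inner ℝ x₁ x₂ : ℝ) = 0 → c x₁ ≤ c (x₁ + x₂)) :
    (Measure.map (mulVecMap A)) '' (ambiguitySet c ε P) ⊆
      ambiguitySet (fun x => c (mulVecMap Ad x)) ε (Measure.map (mulVecMap A) P) := by
  rintro Q' ⟨Q, ⟨hQprob, hQ2, hQW⟩, rfl⟩
  have hA := measurable_mulVecMap A
  -- key cost inequality
  have hBt : (Ad * A)ᵀ = Ad * A := hAd.2.2.2
  have hBB : (Ad * A) * (Ad * A) = Ad * A := by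
        rw [Matrix.mul_assoc, ← Matrix.mul_assoc A Ad A, hAd.1]
  have key : ∀ u : EuclideanSpace ℝ (Fin d), c (mulVecMap (Ad * A) u) ≤ c u := by
    intro u
    have := hortho (mulVecMap (Ad * A) u) (u - mulVecMap (Ad * A) u)
      (inner_ortho (Ad * A) hBt hBB u)
    rwa [add_sub_cancel] at this
  refine ⟨Measure.isProbabilityMeasure_map hA.aemeasurable, ?_, ?_⟩
  · -- finite second moment
    rw [FiniteSecondMoment,
      integrable_map_measure (g := fun x => ‖x‖ ^ 2) ((continuous_norm.pow 2).aestronglyMeasurable) hA.aemeasurable]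
    have hcont : Continuous (mulVecMap A) := by
      rw [mulVecMap_eq]; exact (mulVecCLM A).continuous
    refine (hQ2.const_mul (‖mulVecCLM A‖ ^ 2)).mono' ?_ ?_
    · exact (continuous_norm.comp hcont |>.pow 2).aestronglyMeasurable
    · refine Filter.Eventually.of_forall fun x => ?_
      have h1 : ‖mulVecMap A x‖ ≤ ‖mulVecCLM A‖ * ‖x‖ := by
        rw [mulVecMap_eq]; exact (mulVecCLM A).le_opNorm x
      have : ‖mulVecMap A x‖ ^ 2 ≤ (‖mulVecCLM A‖ * ‖x‖) ^ 2 :=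
        pow_le_pow_left₀ (norm_nonneg _) h1 2
      calc ‖((fun x => ‖x‖ ^ 2) ∘ mulVecMap A) x‖ = ‖mulVecMap A x‖ ^ 2 := by
            simp [Function.comp]
      _ ≤ (‖mulVecCLM A‖ * ‖x‖) ^ 2 := this
      _ = ‖mulVecCLM A‖ ^ 2 * ‖x‖ ^ 2 := by ring
  · -- Wasserstein bound
    refine le_trans ?_ hQW
    refine le_trans (le_iInf₂ fun π hπ => ?_) le_rfl
    have hprod : Measurable (Prod.map (mulVecMap A) (mulVecMap A)) := hA.prodMap hA
    refine le_trans (iInf₂_le (π.map (Prod.map (mulVecMap A) (mulVecMap A))) ?_) ?_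
    · constructor
      · show Measure.map Prod.fst _ = _
        rw [Measure.map_map measurable_fst hprod]
        have : (Prod.fst ∘ Prod.map (mulVecMap A) (mulVecMap A) :
            EuclideanSpace ℝ (Fin d) × EuclideanSpace ℝ (Fin d) → _)
            = mulVecMap A ∘ Prod.fst := rfl
        rw [this, ← Measure.map_map hA measurable_fst, show Measure.map Prod.fst π = Q from hπ.1]
      · show Measure.map Prod.snd _ = _
        rw [Measure.map_map measurable_snd hprod]
        have : (Prod.snd ∘ Prod.map (mulVecMap A) (mulVecMap A) :
            EuclideanSpace ℝ (Fin d) × EuclideanSpace ℝ (Fin d) → _)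
            = mulVecMap A ∘ Prod.snd := rfl
        rw [this, ← Measure.map_map hA measurable_snd, show Measure.map Prod.snd π = P from hπ.2]
    · refine le_trans (lintegral_map_le _ _) (lintegral_mono fun ξ => ?_)
      apply ENNReal.ofReal_le_ofReal
      have hle : c (mulVecMap Ad ((Prod.map (mulVecMap A) (mulVecMap A) ξ).1
          - (Prod.map (mulVecMap A) (mulVecMap A) ξ).2)) ≤ c (ξ.1 - ξ.2) := by
        show c (mulVecMap Ad (mulVecMap A ξ.1 - mulVecMap A ξ.2)) ≤ _
        rw [mulVecMap_sub, mulVecMap_comp]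
        exact key _
      exact pow_le_pow_left₀ (hc _) hle 2

end
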